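/- The identity of formal power series P̃(t)·Ẽ(t) = (1 - y₀t)^{n-2} · [P·E](t/(1 - y₀t)) holds, where P̃(t) = d/dt log C(t/(1-y₀t)), Ẽ(t) = Π_{i=1}^n (1+(y_i-y₀)t), P(t) = d/dt log C(t), and E(t) = Π_{i=1}^n (1+y_it). -/

import Mathlib

/-!
Put `g = t/(1 - y₀t)`, so that `(1 - y₀t)·g = t`. By the chain rule the logarithmic derivative
of `C(g)` is `P(g)·g'`, and differentiating `(1 - y₀t)·g = t` gives `(1 - y₀t)²·g' = 1`.
On the other hand `(1 - y₀t)(1 + y_i g) = 1 + (y_i - y₀)t`, so `Ẽ = (1 - y₀t)ⁿ·E(g)`.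
Multiplying, `P̃·Ẽ = (1 - y₀t)^(n-2)·P(g)·E(g)`.
-/

/-- Substitution of a power series `g` with zero constant term into `F`. -/
noncomputable def substS {R : Type*} [CommRing R] (g F : PowerSeries R) : PowerSeries R :=
  PowerSeries.mk fun n =>
    ∑ k ∈ Finset.range (n + 1), PowerSeries.coeff k F * PowerSeries.coeff n (g ^ k)

/-- The ring `Λ[y₁,…,yₙ]`: `X (inl k)` is `c_k` (`k ≥ 1`), `X (inr i)` is `y_{i+1}`. -/
abbrev Lam (n : ℕ) := MvPolynomial (ℕ ⊕ Fin n) ℤ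

noncomputable def cL (n : ℕ) : ℕ → Lam n :=
  fun k => if k = 0 then 1 else MvPolynomial.X (.inl k)

noncomputable def yL (n : ℕ) : Fin n → Lam n := fun i => MvPolynomial.X (.inr i)

/-- `y₀ = yₙ`. -/
noncomputable def y0L (n : ℕ) : Lam n :=
  if h : 0 < n then yL n ⟨n - 1, Nat.sub_lt h one_pos⟩ else 0

/-- `C(t) = Σ c_k t^k`. -/
noncomputable def CL (n : ℕ) : PowerSeries (Lam n) := PowerSeries.mk (cL n)

/-- `t/(1 - y₀t)`. -/
noncomputable def gL (n : ℕ) : PowerSeries (Lam n) :=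
  PowerSeries.mk fun m => if m = 0 then 0 else y0L n ^ (m - 1)

/-- `H(t) = C(t/(1-y₀t))`. -/
noncomputable def HL (n : ℕ) : PowerSeries (Lam n) := substS (gL n) (CL n)

/-- `E(t) = Π_{i=1}^n (1 + y_i t)`. -/
noncomputable def EL (n : ℕ) : PowerSeries (Lam n) :=
  ∏ i : Fin n, (1 + PowerSeries.C (yL n i) * PowerSeries.X)

/-- `Ẽ(t) = Π_{i=1}^n (1 + (y_i - y₀) t)`. -/
noncomputable def EtL (n : ℕ) : PowerSeries (Lam n) :=
  ∏ i : Fin n, (1 + PowerSeries.C (yL n i - y0L n) * PowerSeries.X)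

namespace PowerSeries

variable {R : Type*} [CommRing R]

theorem substS_eq_subst {g : R⟦X⟧} (hg : constantCoeff g = 0) (F : R⟦X⟧) :
    substS g F = F.subst g := by
  ext n
  rw [coeff_subst' (HasSubst.of_constantCoeff_zero' hg), substS, coeff_mk]
  refine (finsum_eq_sum_of_support_subset _ fun k hk => ?_).symm
  rw [Finset.coe_range, Set.mem_Iio, Nat.lt_succ_iff]
  by_contra! hnk
  refine hk ?_
  change coeff k F * coeff n (g ^ k) = 0
  rw [coeff_of_lt_order (φ := g ^ k), mul_zero]
  calc (n : ℕ∞) < k := by exact_mod_cast hnk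
    _ ≤ order (g ^ k) := le_order_pow_of_constantCoeff_eq_zero k hg

theorem one_sub_C_mul_X_mul_mk_eq_X (a : R) :
    (1 - C a * X) * mk (fun m => if m = 0 then 0 else a ^ (m - 1)) = X := by
  have hgeom : mk (fun m => if m = 0 then 0 else a ^ (m - 1)) = X * rescale a (mk 1) := by
    ext (_ | m) <;> simp [coeff_succ_X_mul]
  have hunit : (1 - C a * X) * rescale a (mk 1) = 1 := by
    simpa [mul_comm] using congrArg (rescale a) (mk_one_mul_one_sub_eq_one (S := R))
  rw [hgeom, mul_left_comm, hunit, mul_one]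

def IsLogDeriv (p F : R⟦X⟧) : Prop := p * F = d⁄dX R F

theorem IsLogDeriv.unique {p q F : R⟦X⟧} (hF : IsUnit F) (hp : IsLogDeriv p F)
    (hq : IsLogDeriv q F) : p = q :=
  hF.mul_left_inj.mp (hp.trans hq.symm)

theorem IsLogDeriv.subst {p F g : R⟦X⟧} (hg : constantCoeff g = 0) (h : IsLogDeriv p F) :
    IsLogDeriv (p.subst g * d⁄dX R g) (F.subst g) := by
  have hs := HasSubst.of_constantCoeff_zero' hg
  rw [IsLogDeriv, derivative_subst hs, ← h, subst_mul hs]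
  ring

section MobiusSubstitution

variable {a : R} {g : R⟦X⟧}

theorem constantCoeff_eq_zero_of_one_sub_C_mul_X_mul_eq_X (hg : (1 - C a * X) * g = X) :
    constantCoeff g = 0 := by
  simpa using congrArg constantCoeff hg

theorem one_sub_C_mul_X_sq_mul_derivative_eq_one (hg : (1 - C a * X) * g = X) :
    (1 - C a * X) ^ 2 * d⁄dX R g = 1 := by
  have hd := congrArg (d⁄dX R) hg
  simp only [Derivation.leibniz, map_sub, derivative_X, Derivation.map_one_eq_zero,
    derivative_C, smul_eq_mul] at hd
  linear_combination (1 - C a * X) * hd + C a * hg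

theorem one_sub_C_mul_X_pow_mul_subst_prod {ι : Type*} [Fintype ι] (y : ι → R)
    (hg : (1 - C a * X) * g = X) :
    (1 - C a * X) ^ Fintype.card ι * (∏ i, (1 + C (y i) * X)).subst g =
      ∏ i, (1 + C (y i - a) * X) := by
  have hs :=
    HasSubst.of_constantCoeff_zero' (constantCoeff_eq_zero_of_one_sub_C_mul_X_mul_eq_X hg)
  rw [← coe_substAlgHom hs, map_prod, ← Finset.card_univ, ← Finset.prod_const,
    ← Finset.prod_mul_distrib]
  refine Finset.prod_congr rfl fun i _ => ?_
  rw [map_add, map_one, ← smul_eq_C_mul X (y i), map_smul, coe_substAlgHom hs, subst_X hs,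
    smul_eq_C_mul, map_sub]
  linear_combination C (y i) * hg

end MobiusSubstitution

end PowerSeries

open PowerSeries

theorem stmt9_general (n : ℕ) (p pt : ℕ → Lam n)
    (hp : (PowerSeries.mk fun j => p (j + 1)) * CL n = (CL n).derivativeFun)
    (hpt : (PowerSeries.mk fun j => pt (j + 1)) * HL n = (HL n).derivativeFun)
    (u : (PowerSeries (Lam n))ˣ)
    (hu : (u : PowerSeries (Lam n)) = 1 - PowerSeries.C (y0L n) * PowerSeries.X) :
    (PowerSeries.mk fun j => pt (j + 1)) * EtL n =
      (↑(u ^ ((n : ℤ) - 2)) : PowerSeries (Lam n)) *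
        substS (gL n) ((PowerSeries.mk fun j => p (j + 1)) * EL n) := by
  set P := mk fun j => p (j + 1)
  set g := gL n
  have hUg : (1 - C (y0L n) * X) * g = X := one_sub_C_mul_X_mul_mk_eq_X (y0L n)
  have hg : constantCoeff g = 0 := constantCoeff_eq_zero_of_one_sub_C_mul_X_mul_eq_X hUg
  have hH : IsUnit ((CL n).subst g) := by
    rw [← substS_eq_subst hg, isUnit_iff_constantCoeff, ← coeff_zero_eq_constantCoeff_apply]
    simp [substS, CL, cL]
  have hPt : mk (fun j => pt (j + 1)) = P.subst g * d⁄dX _ g :=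
    IsLogDeriv.unique hH (by rwa [HL, substS_eq_subst hg] at hpt) (IsLogDeriv.subst hg hp)
  have hE : (u : (Lam n)⟦X⟧) ^ n * (EL n).subst g = EtL n := by
    simpa only [EL, EtL, Fintype.card_fin, hu] using one_sub_C_mul_X_pow_mul_subst_prod (yL n) hUg
  have hu2 : (↑(u ^ ((n : ℤ) - 2)) : (Lam n)⟦X⟧) * u ^ 2 = u ^ n := by
    rw [← Units.val_pow_eq_pow_val, ← Units.val_pow_eq_pow_val, ← Units.val_mul,
      ← zpow_natCast, ← zpow_natCast, ← zpow_add, Nat.cast_ofNat, sub_add_cancel]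
  calc mk (fun j => pt (j + 1)) * EtL n
      = P.subst g * d⁄dX _ g * (u ^ n * (EL n).subst g) := by rw [hPt, hE]
    _ = ↑(u ^ ((n : ℤ) - 2)) * (P.subst g * (EL n).subst g) * (u ^ 2 * d⁄dX _ g) := by
        rw [← hu2]; ring
    _ = ↑(u ^ ((n : ℤ) - 2)) * substS g (P * EL n) := by
        rw [hu, one_sub_C_mul_X_sq_mul_derivative_eq_one hUg, mul_one,
          substS_eq_subst hg, subst_mul (HasSubst.of_constantCoeff_zero' hg)]

/-- The power series identity `P̃(t)·Ẽ(t) = (1-y₀t)^{n-2} · [P·E](t/(1-y₀t))`, where the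
(possibly negative) power of the unit `1 - y₀t` is taken in the unit group. -/
theorem stmt9 (n : ℕ) (hn : 0 < n) (p pt : ℕ → Lam n)
    (hp : (PowerSeries.mk fun j => p (j + 1)) * CL n = (CL n).derivativeFun)
    (hpt : (PowerSeries.mk fun j => pt (j + 1)) * HL n = (HL n).derivativeFun)
    (u : (PowerSeries (Lam n))ˣ)
    (hu : (u : PowerSeries (Lam n)) = 1 - PowerSeries.C (y0L n) * PowerSeries.X) :
    (PowerSeries.mk fun j => pt (j + 1)) * EtL n =
      (↑(u ^ ((n : ℤ) - 2)) : PowerSeries (Lam n)) *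
        substS (gL n) ((PowerSeries.mk fun j => p (j + 1)) * EL n) :=
  stmt9_general n p pt hp hpt u hu
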